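/- If V is an oak tree and T is an almond tree, then the tree T ∩ V has at most one branch: |[T ∩ V]| ≤ 1. -/

import Mathlib

/-- `σ` is a strictly increasing finite sequence of naturals (an element of `ω^{↑<ω}`). -/
def IncSeq (σ : List ℕ) : Prop := List.Chain' (· < ·) σ

/-- A tree: a nonempty set of strictly increasing finite sequences closed under
initial segments. -/
def IsTree (T : Set (List ℕ)) : Prop :=
  T.Nonempty ∧ (∀ σ ∈ T, IncSeq σ) ∧ ∀ σ ∈ T, ∀ τ, τ <+: σ → τ ∈ T

/-- The initial segment of `f` of length `n`, as a finite sequence. -/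
def seg (f : ℕ → ℕ) (n : ℕ) : List ℕ := (List.range n).map f

/-- The branches of `T`: strictly increasing `f : ℕ → ℕ` all of whose initial
segments lie in `T`. -/
def branches (T : Set (List ℕ)) : Set (ℕ → ℕ) :=
  {f | StrictMono f ∧ ∀ n, seg f n ∈ T}

/-- The values of the immediate successors of `σ` in `T`. -/
def succs (T : Set (List ℕ)) (σ : List ℕ) : Set ℕ := {n | σ ++ [n] ∈ T}

/-- `σ` is a splitting node of `T`: it has at least two immediate successors. -/
def IsSplit (T : Set (List ℕ)) (σ : List ℕ) : Prop :=
  σ ∈ T ∧ ∃ m n : ℕ, m ≠ n ∧ σ ++ [m] ∈ T ∧ σ ++ [n] ∈ T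

/-- `σ` is an infinite-splitting node of `T`. -/
def IsInfSplit (T : Set (List ℕ)) (σ : List ℕ) : Prop :=
  σ ∈ T ∧ (succs T σ).Infinite

/-- The initial segment of length `n` of the increasing enumeration of `X`. -/
noncomputable def enumList (X : Set ℕ) (n : ℕ) : List ℕ :=
  (List.range n).map (Nat.nth fun k => k ∈ X)

/-- The Silver tree determined by `G = g⁻¹(1)` and the (infinite) set `F` of free
coordinates: all initial segments of increasing enumerations of infinite sets `X`
with `G ⊆ X ⊆ G ∪ F`. -/
def silverTree (G F : Set ℕ) : Set (List ℕ) :=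
  {σ | ∃ X : Set ℕ, X.Infinite ∧ G ⊆ X ∧ X ⊆ G ∪ F ∧ ∃ n, σ = enumList X n}

/-- A Silver tree. -/
def IsSilver (V : Set (List ℕ)) : Prop :=
  ∃ G F : Set ℕ, F.Infinite ∧ Disjoint G F ∧ V = silverTree G F

/-- The Matet tree `T(s,A)` determined by `s` and the family `a`: all initial
segments of words `s⌢τ_{a_{i_0}}⌢…⌢τ_{a_{i_k}}` with `i_0 < … < i_k`, where `τ_b`
is the increasing enumeration of `b`. -/
def matetTree (s : List ℕ) (a : ℕ → Finset ℕ) : Set (List ℕ) :=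
  {σ | ∃ l : List ℕ, List.Chain' (· < ·) l ∧
      σ <+: s ++ (l.map fun i => (a i).sort (· ≤ ·)).flatten}

/-- The side conditions on the data of a Matet tree. -/
def IsMatetSystem (s : List ℕ) (a : ℕ → Finset ℕ) : Prop :=
  IncSeq s ∧ (∀ n, (a n).Nonempty) ∧
  (∀ x ∈ s, ∀ y ∈ a 0, x < y) ∧
  (∀ n, ∀ x ∈ a n, ∀ y ∈ a (n + 1), x < y)

/-- A Matet tree. -/
def IsMatet (T : Set (List ℕ)) : Prop :=
  ∃ s a, IsMatetSystem s a ∧ T = matetTree s a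

/-- An oak tree: a Silver tree `V(g)` (given by `G = g⁻¹(1)` and the free coordinates
`F = ω \ dom g`) such that between any two free coordinates there is an element of
`g⁻¹(1)`. -/
def IsOak (V : Set (List ℕ)) : Prop :=
  ∃ G F : Set ℕ, F.Infinite ∧ Disjoint G F ∧ V = silverTree G F ∧
    ∀ i₀ ∈ F, ∀ i₁ ∈ F, i₀ < i₁ → ∃ i₂ ∈ G, i₀ < i₂ ∧ i₂ < i₁

/-- An almond tree: a Matet tree `T(s,A)` with `|a_n| ≥ 2` for all `n`. -/
def IsAlmond (T : Set (List ℕ)) : Prop :=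
  ∃ s a, IsMatetSystem s a ∧ (∀ n, 2 ≤ (a n).card) ∧ T = matetTree s a


lemma seg_length (f : ℕ → ℕ) (n : ℕ) : (seg f n).length = n := by simp [seg]

lemma seg_getElem? {f : ℕ → ℕ} {n i : ℕ} (h : i < n) : (seg f n)[i]? = some (f i) := by
  simp [seg, h]

lemma mem_seg {f : ℕ → ℕ} {n x : ℕ} : x ∈ seg f n ↔ ∃ i < n, f i = x := by
  simp [seg]

lemma enumList_getElem? {X : Set ℕ} {n i : ℕ} (h : i < n) :
    (enumList X n)[i]? = some (Nat.nth (fun k => k ∈ X) i) := by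
  simp [enumList, h]

lemma strictMono_eq_of_range_eq {f g : ℕ → ℕ} (hf : StrictMono f) (hg : StrictMono g)
    (h : Set.range f = Set.range g) : f = g := by
  funext n
  induction n using Nat.strong_induction_on with
  | _ n ih =>
    have h1 : f n ≤ g n := by
      obtain ⟨m, hm⟩ := h ▸ Set.mem_range_self (f := g) n
      rcases lt_or_ge m n with hlt | hle
      · exact absurd (hg.injective ((ih m hlt).symm.trans hm)) hlt.ne
      · exact le_of_le_of_eq (hf.monotone hle) hm
    have h2 : g n ≤ f n := by
      obtain ⟨m, hm⟩ := h.symm ▸ Set.mem_range_self (f := f) n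
      rcases lt_or_ge m n with hlt | hle
      · exact absurd (hf.injective ((ih m hlt).trans hm)) hlt.ne
      · exact le_of_le_of_eq (hg.monotone hle) hm
    omega

lemma seg_eq_enum {f : ℕ → ℕ} {X : Set ℕ} {n i : ℕ} (hn : seg f n = enumList X n)
    (h : i < n) : f i = Nat.nth (fun k => k ∈ X) i := by
  have h1 := congrArg (fun l => l[i]?) hn
  simp only [seg_getElem? h, enumList_getElem? h, Option.some.injEq] at h1
  exact h1

lemma silver_branch {G F : Set ℕ} {f : ℕ → ℕ}
    (h : ∀ n, seg f n ∈ silverTree G F) :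
    G ⊆ Set.range f ∧ Set.range f ⊆ G ∪ F := by
  classical
  constructor
  · intro m hm
    obtain ⟨X, hXinf, hGX, hXGF, n, hn⟩ := h (m + 1)
    have hlen : n = m + 1 := by
      have := congrArg List.length hn
      simpa [seg, enumList, eq_comm] using this
    subst hlen
    have hmX : m ∈ X := hGX hm
    have hc : Nat.count (fun k => k ∈ X) m < m + 1 :=
      Nat.lt_succ_of_le (Nat.count_le _)
    refine ⟨Nat.count (fun k => k ∈ X) m, ?_⟩
    rw [seg_eq_enum hn hc]
    exact Nat.nth_count (p := fun k => k ∈ X) hmX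
  · rintro _ ⟨k, rfl⟩
    obtain ⟨X, hXinf, hGX, hXGF, n, hn⟩ := h (k + 1)
    have hlen : n = k + 1 := by
      have := congrArg List.length hn
      simpa [seg, enumList, eq_comm] using this
    subst hlen
    rw [seg_eq_enum hn (Nat.lt_succ_self k)]
    exact hXGF (Nat.nth_mem_of_infinite (by simpa using hXinf) k)

section Matet
variable {s : List ℕ} {a : ℕ → Finset ℕ}

/-- The word part of a Matet tree word. -/
def mw (a : ℕ → Finset ℕ) (l : List ℕ) : List ℕ :=
  (l.map fun i => (a i).sort (· ≤ ·)).flatten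

lemma mem_mw {l : List ℕ} {x : ℕ} : x ∈ mw a l ↔ ∃ i ∈ l, x ∈ a i := by
  simp [mw, List.mem_flatten]

lemma mem_matetTree {σ : List ℕ} :
    σ ∈ matetTree s a ↔ ∃ l, List.Chain' (· < ·) l ∧ σ <+: s ++ mw a l := Iff.rfl

lemma block_lt (hsa : IsMatetSystem s a) {i j x y : ℕ} (hij : i < j)
    (hx : x ∈ a i) (hy : y ∈ a j) : x < y := by
  obtain ⟨d, rfl⟩ := Nat.exists_eq_add_of_lt hij
  clear hij
  induction d generalizing y with
  | zero => exact hsa.2.2.2 i x hx y hy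
  | succ d ih =>
    obtain ⟨z, hz⟩ := hsa.2.1 (i + d + 1)
    exact lt_trans (ih hz)
      (hsa.2.2.2 (i + d + 1) z hz y hy)

lemma block_disjoint (hsa : IsMatetSystem s a) {i j x : ℕ}
    (hi : x ∈ a i) (hj : x ∈ a j) : i = j := by
  rcases lt_trichotomy i j with h | h | h
  · exact absurd (block_lt hsa h hi hj) (lt_irrefl x)
  · exact h
  · exact absurd (block_lt hsa h hj hi) (lt_irrefl x)

lemma s_lt_block (hsa : IsMatetSystem s a) {x y n : ℕ} (hx : x ∈ s) (hy : y ∈ a n) :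
    x < y := by
  cases n with
  | zero => exact hsa.2.2.1 x hx y hy
  | succ m =>
    obtain ⟨z, hz⟩ := hsa.2.1 0
    exact lt_trans (hsa.2.2.1 x hx z hz) (block_lt hsa (Nat.succ_pos m) hz hy)

lemma pairwise_mw (hsa : IsMatetSystem s a) {l : List ℕ}
    (hl : List.Pairwise (· < ·) l) : List.Pairwise (· < ·) (mw a l) := by
  induction l with
  | nil => simp [mw]
  | cons i l ih =>
    have : mw a (i :: l) = (a i).sort (· ≤ ·) ++ mw a l := by simp [mw]
    rw [this, List.pairwise_append]
    rw [List.pairwise_cons] at hl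
    refine ⟨List.sortedLT_iff_pairwise.mp (Finset.sortedLT_sort _), ih hl.2, ?_⟩
    intro x hx y hy
    obtain ⟨j, hj, hyj⟩ := mem_mw.mp hy
    exact block_lt hsa (hl.1 j hj) (Finset.mem_sort _ |>.mp hx) hyj

lemma pairwise_word (hsa : IsMatetSystem s a) {l : List ℕ}
    (hl : List.Chain' (· < ·) l) : List.Pairwise (· < ·) (s ++ mw a l) := by
  rw [List.pairwise_append]
  refine ⟨List.isChain_iff_pairwise.mp hsa.1,
    pairwise_mw hsa (List.isChain_iff_pairwise.mp hl), ?_⟩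
  intro x hx y hy
  obtain ⟨j, _, hyj⟩ := mem_mw.mp hy
  exact s_lt_block hsa hx hyj

end Matet

lemma seg_getElem {f : ℕ → ℕ} {n i : ℕ} (h : i < n) :
    (seg f n)[i]'(by simpa [seg_length] using h) = f i := by
  simp [seg]

section Branch
variable {s : List ℕ} {a : ℕ → Finset ℕ} {f : ℕ → ℕ}

lemma branch_eq_s (hbf : ∀ n, seg f n ∈ matetTree s a) {i : ℕ} (h : i < s.length) :
    f i = s[i] := by
  obtain ⟨l, hl, hpre⟩ := hbf s.length
  have h1 := List.prefix_iff_eq_take.mp hpre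
  rw [seg_length, List.take_append_of_le_length le_rfl, List.take_length] at h1
  have h2 := congrArg (fun t => t[i]?) h1
  simp only [seg_getElem? h] at h2
  rw [List.getElem?_eq_getElem h] at h2
  exact Option.some.inj h2

lemma s_lt_branch (hf : StrictMono f) (hbf : ∀ n, seg f n ∈ matetTree s a)
    {x k : ℕ} (hx : x ∈ s) (hk : s.length ≤ k) : x < f k := by
  obtain ⟨i, hi, rfl⟩ := List.getElem_of_mem hx
  rw [← branch_eq_s hbf hi]
  exact hf (lt_of_lt_of_le hi hk)

lemma branch_block (hsa : IsMatetSystem s a) (hf : StrictMono f)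
    (hbf : ∀ n, seg f n ∈ matetTree s a) {k : ℕ} (hk : s.length ≤ k) :
    ∃ j, f k ∈ a j ∧ ∀ y ∈ a j, y ∈ Set.range f := by
  obtain ⟨l₀, hl₀, hpre₀⟩ := hbf (k + 1)
  have hnot_s : ∀ x ∈ s, x < f k := fun x hx => s_lt_branch hf hbf hx hk
  have hmem₀ : f k ∈ s ++ mw a l₀ :=
    hpre₀.subset (mem_seg.mpr ⟨k, Nat.lt_succ_self k, rfl⟩)
  have hfk_mw : f k ∈ mw a l₀ := by
    rcases List.mem_append.mp hmem₀ with h | h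
    · exact absurd (hnot_s _ h) (lt_irrefl _)
    · exact h
  obtain ⟨j, hjl₀, hfkj⟩ := mem_mw.mp hfk_mw
  refine ⟨j, hfkj, ?_⟩
  intro y hy
  obtain ⟨l, hl, hpre⟩ := hbf (k + (a j).card + 2)
  set n := k + (a j).card + 2 with hn
  set w := s ++ mw a l with hw
  have hPW : List.Pairwise (· < ·) w := pairwise_word hsa hl
  have hmono : ∀ p q (hp : p < w.length) (hq : q < w.length), p < q → w[p] < w[q] :=
    fun p q hp hq h => List.pairwise_iff_getElem.mp hPW p q hp hq h
  have hlen : n ≤ w.length := by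
    have := hpre.length_le; rwa [seg_length] at this
  have hsegw : ∀ i (h : i < n), f i = w[i]'(lt_of_lt_of_le h hlen) := by
    intro i h
    exact (seg_getElem h).symm.trans (hpre.getElem (by rw [seg_length]; exact h))
  have hfkw : f k ∈ w := by
    rw [hsegw k (by omega)]; exact List.getElem_mem _
  have hjl : j ∈ l := by
    have hfk_mw' : f k ∈ mw a l := by
      rcases List.mem_append.mp hfkw with h | h
      · exact absurd (hnot_s _ h) (lt_irrefl _)
      · exact h
    obtain ⟨j', hj'l, hfkj'⟩ := mem_mw.mp hfk_mw'
    rwa [block_disjoint hsa hfkj hfkj']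
  have hyw : y ∈ w := List.mem_append.mpr (Or.inr (mem_mw.mpr ⟨j, hjl, hy⟩))
  obtain ⟨m, hm, hym⟩ := List.getElem_of_mem hyw
  rcases lt_or_ge m n with hmn | hmn
  · exact ⟨m, by rw [hsegw m hmn]; exact hym⟩
  · exfalso
    have hwk : w[k]'(lt_of_lt_of_le (by omega) hlen) = f k := (hsegw k (by omega)).symm
    have key : ∀ p (hp : p < w.length), k < p → p ≤ m → w[p] ∈ a j := by
      intro p hp hpk hpm
      have hwp_mem : w[p] ∈ w := List.getElem_mem _
      have hfk_lt : f k < w[p] := by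
        rw [← hwk]; exact hmono k p _ hp hpk
      have hwp_mw : w[p] ∈ mw a l := by
        rcases List.mem_append.mp hwp_mem with h | h
        · exact absurd hfk_lt (by have := hnot_s _ h; omega)
        · exact h
      obtain ⟨j'', hj''l, hwpj''⟩ := mem_mw.mp hwp_mw
      rcases lt_trichotomy j'' j with hlt | heq | hgt
      · exact absurd (block_lt hsa hlt hwpj'' hfkj) (by omega)
      · exact heq ▸ hwpj''
      · exfalso
        have h1 : y < w[p] := block_lt hsa hgt hy hwpj''
        have h2 : w[p] ≤ y := by
          rcases eq_or_lt_of_le hpm with rfl | hlt'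
          · rw [hym]
          · have := hmono p m hp hm hlt'
            rw [hym] at this; exact this.le
        omega
    have hcard : (Finset.Ioc k m).card ≤ (a j).card := by
      apply Finset.card_le_card_of_injOn (fun p => w.getD p 0)
      · intro p hp
        simp only [Finset.coe_Ioc, Set.mem_Ioc, Finset.mem_Ioc] at hp
        have hp' : p < w.length := lt_of_le_of_lt hp.2 hm
        simp only [Finset.mem_coe, List.getD_eq_getElem _ _ hp']
        exact key p hp' hp.1 hp.2
      · intro p hp q hq heq
        simp only [Finset.coe_Ioc, Set.mem_Ioc] at hp hq
        have hp' : p < w.length := lt_of_le_of_lt hp.2 hm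
        have hq' : q < w.length := lt_of_le_of_lt hq.2 hm
        simp only [List.getD_eq_getElem _ _ hp', List.getD_eq_getElem _ _ hq'] at heq
        by_contra hne
        rcases lt_or_gt_of_ne hne with h | h
        · exact absurd heq (ne_of_lt (hmono p q hp' hq' h))
        · exact absurd heq.symm (ne_of_lt (hmono q p hq' hp' h))
    rw [Nat.card_Ioc] at hcard
    omega

end Branch

lemma range_subset {G F : Set ℕ} {s : List ℕ} {a : ℕ → Finset ℕ} {f g : ℕ → ℕ}
    (hsa : IsMatetSystem s a) (hcard : ∀ n, 2 ≤ (a n).card)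
    (hGF : Disjoint G F)
    (hoak : ∀ i₀ ∈ F, ∀ i₁ ∈ F, i₀ < i₁ → ∃ i₂ ∈ G, i₀ < i₂ ∧ i₂ < i₁)
    (hf : StrictMono f) (hg : StrictMono g)
    (hbfT : ∀ n, seg f n ∈ matetTree s a) (hbgT : ∀ n, seg g n ∈ matetTree s a)
    (hbfV : ∀ n, seg f n ∈ silverTree G F) (hbgV : ∀ n, seg g n ∈ silverTree G F) :
    Set.range f ⊆ Set.range g := by
  rintro _ ⟨k, rfl⟩
  by_contra hxg
  obtain ⟨hGf, hfGF⟩ := silver_branch hbfV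
  obtain ⟨hGg, hgGF⟩ := silver_branch hbgV
  have hks : s.length ≤ k := by
    by_contra h
    push_neg at h
    exact hxg ⟨k, (branch_eq_s hbgT h).trans (branch_eq_s hbfT h).symm⟩
  obtain ⟨j, hfkj, hfull⟩ := branch_block hsa hf hbfT hks
  have hdisj : ∀ z ∈ a j, z ∉ Set.range g := by
    rintro z hz ⟨m, rfl⟩
    have hms : s.length ≤ m := by
      by_contra h
      push_neg at h
      have hmem : g m ∈ s := by rw [branch_eq_s hbgT h]; exact List.getElem_mem _
      exact absurd (s_lt_block hsa hmem hz) (lt_irrefl _)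
    obtain ⟨j', hgmj', hfull'⟩ := branch_block hsa hg hbgT hms
    have hjj : j' = j := block_disjoint hsa hgmj' hz
    exact hxg (hfull' (f k) (hjj.symm ▸ hfkj))
  have hajF : ∀ z ∈ a j, z ∈ F := by
    intro z hz
    rcases hfGF (hfull z hz) with h | h
    · exact absurd (hGg h) (hdisj z hz)
    · exact h
  obtain ⟨i₀, hi₀, i₁, hi₁, hne⟩ := Finset.one_lt_card.mp (hcard j)
  have main : ∀ p₀ ∈ a j, ∀ p₁ ∈ a j, p₀ < p₁ → False := by
    intro p₀ hp₀ p₁ hp₁ hlt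
    obtain ⟨i₂, hi₂G, h₀, h₁⟩ := hoak p₀ (hajF _ hp₀) p₁ (hajF _ hp₁) hlt
    obtain ⟨k', hk'⟩ := hGf hi₂G
    have hk's : s.length ≤ k' := by
      by_contra h
      push_neg at h
      have hmem : f k' ∈ s := by rw [branch_eq_s hbfT h]; exact List.getElem_mem _
      have := s_lt_block hsa hmem hp₀
      omega
    obtain ⟨j'', hj''⟩ := branch_block hsa hf hbfT hk's
    have hj''a : f k' ∈ a j'' := hj''.1
    rcases lt_trichotomy j'' j with hc | hc | hc
    · have := block_lt hsa hc hj''a hp₀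
      omega
    · have hF : f k' ∈ F := hajF _ (hc ▸ hj''a)
      rw [hk'] at hF
      exact Set.disjoint_left.mp hGF hi₂G hF
    · have := block_lt hsa hc hp₁ hj''a
      omega
  rcases hne.lt_or_gt with hlt | hlt
  · exact main _ hi₀ _ hi₁ hlt
  · exact main _ hi₁ _ hi₀ hlt

/-- **Proposition 2.10 (claim).** If `V` is an oak tree and `T` is an almond tree,
then `T ∩ V` has at most one branch. -/
theorem oak_almond_at_most_one_branch
    (V T : Set (List ℕ)) (hV : IsOak V) (hT : IsAlmond T) :
    (branches (T ∩ V)).Subsingleton := by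
  obtain ⟨G, F, hFinf, hGF, rfl, hoak⟩ := hV
  obtain ⟨s, a, hsa, hcard, rfl⟩ := hT
  intro f hfm g hgm
  obtain ⟨hf, hbf⟩ := hfm
  obtain ⟨hg, hbg⟩ := hgm
  have hbfT : ∀ n, seg f n ∈ matetTree s a := fun n => (hbf n).1
  have hbfV : ∀ n, seg f n ∈ silverTree G F := fun n => (hbf n).2
  have hbgT : ∀ n, seg g n ∈ matetTree s a := fun n => (hbg n).1
  have hbgV : ∀ n, seg g n ∈ silverTree G F := fun n => (hbg n).2
  exact strictMono_eq_of_range_eq hf hg (Set.Subset.antisymm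
    (range_subset hsa hcard hGF hoak hf hg hbfT hbgT hbfV hbgV)
    (range_subset hsa hcard hGF hoak hg hf hbgT hbfT hbgV hbfV))
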